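/- Let n ≥ 2. The powerful covering number of the dihedral group DihedralGroup (2^n) of order 2^(n+1) equals 2^(n-1) + 1; that is, there exists a cover of DihedralGroup (2^n) by 2^(n-1) + 1 proper powerful subgroups, and every cover of DihedralGroup (2^n) by proper powerful subgroups contains at least 2^(n-1) + 1 subgroups. -/

import Mathlib

open DihedralGroup

/-- A finite `p`-group `H` is *powerful* if, when `p` is odd, `[H,H]` is contained in the
subgroup generated by `p`-th powers, and when `p = 2`, `[H,H]` is contained in the subgroup
generated by fourth powers. -/
def IsPowerful (p : ℕ) (H : Type*) [Group H] : Prop :=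
  commutator H ≤ Subgroup.closure {x : H | ∃ g : H, x = g ^ (if p = 2 then 4 else p)}

/-- A cover of a group by proper subgroups. -/
def IsSubgroupCover {G : Type*} [Group G] (S : Finset (Subgroup G)) : Prop :=
  (∀ H ∈ S, H ≠ ⊤) ∧ ∀ g : G, ∃ H ∈ S, g ∈ H

/-!
The rotations form an abelian subgroup, and for each residue `q` modulo `2 ^ m` the rotations
`r j` with `2 * j = 0` together with the reflections `sr i`, `i ≡ q`, form a Klein four-group:
these `2 ^ m + 1` abelian subgroups cover `DihedralGroup (2 ^ (m + 1))`.

Conversely, a proper subgroup containing `r 1` contains no reflection. If a powerful subgroup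
contains `sr a` and `sr a * r j`, their commutator `r (2 * j)` is a product of fourth powers,
all of which are `r (4 * z)` with `r z` again in the subgroup; iterating, `2 * j` is divisible
by every power of `2`, hence zero. So the reflections of a powerful subgroup share one residue
modulo `2 ^ m`, and the `2 ^ m` residues need `2 ^ m` further subgroups.
-/

open scoped commutatorElement

theorem isPowerful_of_isMulCommutative (p : ℕ) (H : Type*) [Group H] [IsMulCommutative H] :
    IsPowerful p H := by
  rw [IsPowerful, commutator_eq_bot]
  exact bot_le

theorem IsPowerful.commutatorElement_mem {G : Type*} [Group G] {H K : Subgroup G}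
    (hH : IsPowerful 2 H) (hK : ∀ g ∈ H, g ^ 4 ∈ K) {x y : G} (hx : x ∈ H) (hy : y ∈ H) :
    ⁅x, y⁆ ∈ K := by
  have hclosure : Subgroup.closure {z : H | ∃ g : H, z = g ^ (if 2 = 2 then 4 else 2)} ≤
      K.comap H.subtype := by
    rw [Subgroup.closure_le]
    rintro _ ⟨g, rfl⟩
    exact hK g g.2
  have hxy : ⁅(⟨x, hx⟩ : H), ⟨y, hy⟩⁆ ∈ commutator H :=
    Subgroup.commutator_mem_commutator (Subgroup.mem_top _) (Subgroup.mem_top _)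
  simpa only [Subgroup.mem_comap, map_commutatorElement, Subgroup.coe_subtype] using
    hclosure (hH hxy)

theorem two_mul_eq_zero_of_forall_exists_two_mul_eq_four_mul {R : Type*} [Semiring R] {N : ℕ}
    (hN : (2 : R) ^ N = 0) {A : Set R} (hA : ∀ j ∈ A, ∃ z ∈ A, 2 * j = 4 * z) {j : R}
    (hj : j ∈ A) : 2 * j = 0 := by
  have hdvd : ∀ s : ℕ, ∃ z ∈ A, 2 * j = 2 ^ (s + 1) * z := by
    intro s
    induction s with
    | zero => exact ⟨j, hj, by rw [zero_add, pow_one]⟩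
    | succ s ih =>
      obtain ⟨y, hy, hjy⟩ := ih
      obtain ⟨z, hz, hyz⟩ := hA y hy
      refine ⟨z, hz, ?_⟩
      rw [hjy, pow_succ, mul_assoc, hyz, ← mul_assoc, pow_succ, pow_succ, mul_assoc _ (2 : R) 2]
      norm_num
  obtain ⟨z, -, hz⟩ := hdvd N
  rw [hz, pow_succ, hN, zero_mul, zero_mul]

theorem ZMod.castHom_eq_zero_iff_mul_eq_zero {p : ℕ} (hp : p ≠ 0) (m : ℕ)
    (x : ZMod (p ^ (m + 1))) :
    ZMod.castHom (pow_dvd_pow p m.le_succ) (ZMod (p ^ m)) x = 0 ↔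
      (p : ZMod (p ^ (m + 1))) * x = 0 := by
  obtain ⟨y, rfl⟩ := ZMod.intCast_surjective x
  rw [map_intCast, ← Int.cast_natCast, ← Int.cast_mul, ZMod.intCast_zmod_eq_zero_iff_dvd,
    ZMod.intCast_zmod_eq_zero_iff_dvd, pow_succ', Nat.cast_mul,
    mul_dvd_mul_iff_left (by exact_mod_cast hp)]

namespace DihedralGroup

variable {n : ℕ}

theorem sr_pow_four (i : ZMod n) : sr i ^ 4 = 1 :=
  orderOf_dvd_iff_pow_eq_one.1 (by rw [orderOf_sr]; norm_num)

theorem commutatorElement_sr_sr (i j : ZMod n) : ⁅sr i, sr j⁆ = r (2 * (j - i)) := by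
  rw [commutatorElement_def, inv_sr, inv_sr, sr_mul_sr, r_mul_sr, sr_mul_sr]
  ring_nf

theorem eq_top_of_r_one_mem_of_sr_mem {H : Subgroup (DihedralGroup n)} (h1 : r 1 ∈ H)
    {i : ZMod n} (hi : sr i ∈ H) : H = ⊤ := by
  have hr : ∀ j, r j ∈ H := by
    intro j
    obtain ⟨k, rfl⟩ := ZMod.intCast_surjective j
    simpa using H.zpow_mem h1 k
  rw [Subgroup.eq_top_iff']
  rintro (j | j)
  · exact hr j
  · simpa using H.mul_mem hi (hr (j - i))

def fourthPowersOfRotations (H : Subgroup (DihedralGroup n)) : Subgroup (DihedralGroup n) where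
  carrier := {x | ∃ j, r j ∈ H ∧ r (4 * j) = x}
  one_mem' := ⟨0, H.one_mem, by rw [mul_zero, r_zero]⟩
  mul_mem' := by
    rintro _ _ ⟨j, hj, rfl⟩ ⟨k, hk, rfl⟩
    exact ⟨j + k, by simpa using H.mul_mem hj hk, by rw [r_mul_r, mul_add]⟩
  inv_mem' := by
    rintro _ ⟨j, hj, rfl⟩
    exact ⟨-j, by simpa using H.inv_mem hj, by rw [inv_r, mul_neg]⟩

theorem pow_four_mem_fourthPowersOfRotations {H : Subgroup (DihedralGroup n)}
    {g : DihedralGroup n} (hg : g ∈ H) : g ^ 4 ∈ fourthPowersOfRotations H := by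
  cases g with
  | r j => exact ⟨j, hg, by rw [r_pow]; ring_nf⟩
  | sr i => rw [sr_pow_four]; exact Subgroup.one_mem _

theorem two_mul_sub_eq_zero_of_sr_mem {k : ℕ} {H : Subgroup (DihedralGroup (2 ^ k))}
    (hH : IsPowerful 2 H) {a b : ZMod (2 ^ k)} (ha : sr a ∈ H) (hb : sr b ∈ H) :
    2 * (b - a) = 0 := by
  refine two_mul_eq_zero_of_forall_exists_two_mul_eq_four_mul (N := k) (A := {j | r j ∈ H})
    (by exact_mod_cast ZMod.natCast_self (2 ^ k)) ?_ (by simpa using H.mul_mem ha hb)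
  intro j hj
  have hsr : sr (a + j) ∈ H := by simpa using H.mul_mem ha hj
  obtain ⟨z, hz, hzj⟩ :=
    hH.commutatorElement_mem (fun _ => pow_four_mem_fourthPowersOfRotations) ha hsr
  rw [commutatorElement_sr_sr, add_sub_cancel_left] at hzj
  exact ⟨z, hz, (r.inj hzj).symm⟩

theorem castHom_eq_of_sr_mem {m : ℕ} {H : Subgroup (DihedralGroup (2 ^ (m + 1)))}
    (hH : IsPowerful 2 H) {a b : ZMod (2 ^ (m + 1))} (ha : sr a ∈ H) (hb : sr b ∈ H) :
    ZMod.castHom (pow_dvd_pow 2 m.le_succ) (ZMod (2 ^ m)) a =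
      ZMod.castHom (pow_dvd_pow 2 m.le_succ) (ZMod (2 ^ m)) b := by
  rw [← sub_eq_zero, ← map_sub, ZMod.castHom_eq_zero_iff_mul_eq_zero two_ne_zero]
  exact_mod_cast two_mul_sub_eq_zero_of_sr_mem hH hb ha

section fiberSubgroup

variable {A F : Type*} [AddCommGroup A] [FunLike F (ZMod n) A] [AddMonoidHomClass F (ZMod n) A]

def fiberSubgroup (π : F) (q : A) : Subgroup (DihedralGroup n) where
  carrier := {x | match x with | r j => π j = 0 | sr i => π i = q}
  one_mem' := map_zero π
  mul_mem' := by
    rintro (j | i) (k | l) hx hy <;> simp_all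
  inv_mem' := by
    rintro (j | i) hx <;> simp_all

@[simp]
theorem r_mem_fiberSubgroup {π : F} {q : A} {j : ZMod n} : r j ∈ fiberSubgroup π q ↔ π j = 0 :=
  Iff.rfl

@[simp]
theorem sr_mem_fiberSubgroup {π : F} {q : A} {i : ZMod n} : sr i ∈ fiberSubgroup π q ↔ π i = q :=
  Iff.rfl

theorem fiberSubgroup_injective {π : F} (hπ : Function.Surjective π) :
    Function.Injective (fiberSubgroup π) := by
  intro q q' h
  obtain ⟨i, rfl⟩ := hπ q
  have : sr i ∈ fiberSubgroup π q' := h ▸ sr_mem_fiberSubgroup.2 rfl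
  exact sr_mem_fiberSubgroup.1 this

theorem isPowerful_fiberSubgroup {π : F} (hπ : ∀ j, π j = 0 → 2 * j = 0) (q : A) :
    IsPowerful 2 (fiberSubgroup π q) := by
  have horder : ∀ g : fiberSubgroup π q, orderOf g ∣ 2 := by
    rintro ⟨g, hg⟩
    refine orderOf_dvd_of_pow_eq_one (Subtype.ext ?_)
    cases g with
    | r j => simp [r_pow, mul_comm j, hπ j hg]
    | sr i => simp [pow_two]
  have : IsMulCommutative (fiberSubgroup π q) := ⟨⟨Commute.of_orderOf_dvd_two horder⟩⟩
  exact isPowerful_of_isMulCommutative 2 _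

end fiberSubgroup

theorem r_mem_zpowers_r_one (j : ZMod n) : r j ∈ Subgroup.zpowers (r 1) := by
  obtain ⟨k, rfl⟩ := ZMod.intCast_surjective j
  exact ⟨k, r_one_zpow k⟩

theorem sr_notMem_zpowers_r_one (i : ZMod n) : sr i ∉ Subgroup.zpowers (r 1) := by
  rintro ⟨k, hk⟩
  simp at hk

theorem exists_powerful_cover {m : ℕ} (hm : m ≠ 0) :
    ∃ S : Finset (Subgroup (DihedralGroup (2 ^ (m + 1)))),
      S.card = 2 ^ m + 1 ∧ IsSubgroupCover S ∧ ∀ H ∈ S, IsPowerful 2 H := by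
  classical
  set π := ZMod.castHom (pow_dvd_pow 2 m.le_succ) (ZMod (2 ^ m))
  have hπ : Function.Surjective π := ZMod.castHom_surjective _
  have : Fact (1 < 2 ^ m) := ⟨Nat.one_lt_two_pow hm⟩
  have hrot : Subgroup.zpowers (r 1) ∉ Finset.univ.image (fiberSubgroup π) := by
    simp only [Finset.mem_image, Finset.mem_univ, true_and, not_exists]
    intro q hq
    obtain ⟨i, rfl⟩ := hπ q
    exact sr_notMem_zpowers_r_one i (hq ▸ sr_mem_fiberSubgroup.2 rfl)
  refine ⟨insert (Subgroup.zpowers (r 1)) (Finset.univ.image (fiberSubgroup π)), ?_, ⟨?_, ?_⟩, ?_⟩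
  · rw [Finset.card_insert_of_notMem hrot,
      Finset.card_image_of_injective _ (fiberSubgroup_injective hπ), Finset.card_univ, ZMod.card]
  · simp only [Finset.mem_insert, Finset.mem_image, Finset.mem_univ, true_and]
    rintro H (rfl | ⟨q, rfl⟩) htop
    · exact sr_notMem_zpowers_r_one 0 (htop ▸ Subgroup.mem_top _)
    · have h1 : π 1 = 0 := r_mem_fiberSubgroup.1 (htop ▸ Subgroup.mem_top (r 1))
      exact one_ne_zero (map_one π ▸ h1)
  · rintro (j | i)
    · exact ⟨_, Finset.mem_insert_self _ _, r_mem_zpowers_r_one j⟩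
    · exact ⟨fiberSubgroup π (π i), Finset.mem_insert_of_mem (by simp), rfl⟩
  · simp only [Finset.mem_insert, Finset.mem_image, Finset.mem_univ, true_and]
    rintro H (rfl | ⟨q, rfl⟩)
    · exact isPowerful_of_isMulCommutative 2 _
    · refine isPowerful_fiberSubgroup (fun j hj => ?_) q
      exact_mod_cast (ZMod.castHom_eq_zero_iff_mul_eq_zero two_ne_zero m j).1 hj

theorem card_le_of_powerful_cover {m : ℕ} {S : Finset (Subgroup (DihedralGroup (2 ^ (m + 1))))}
    (hS : IsSubgroupCover S) (hP : ∀ H ∈ S, IsPowerful 2 H) : 2 ^ m + 1 ≤ S.card := by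
  classical
  set π := ZMod.castHom (pow_dvd_pow 2 m.le_succ) (ZMod (2 ^ m))
  have hπ : Function.Surjective π := ZMod.castHom_surjective _
  obtain ⟨H₁, hH₁, hr⟩ := hS.2 (r 1)
  choose f hfS hf using fun i => hS.2 (sr i)
  have hf_ne : ∀ i, f i ≠ H₁ := fun i h =>
    hS.1 H₁ hH₁ (eq_top_of_r_one_mem_of_sr_mem hr (h ▸ hf i))
  have hinj : Set.InjOn (fun q => f (Function.surjInv hπ q))
      (Finset.univ : Finset (ZMod (2 ^ m))) := by
    intro q _ q' _ (h : f _ = f _)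
    rw [← Function.surjInv_eq hπ q, ← Function.surjInv_eq hπ q']
    exact castHom_eq_of_sr_mem (hP _ (hfS _)) (hf _) (h ▸ hf _)
  have hcard := Finset.card_le_card_of_injOn _
    (fun q _ => Finset.mem_erase.2 ⟨hf_ne _, hfS _⟩) hinj
  rw [Finset.card_univ, ZMod.card, Finset.card_erase_of_mem hH₁] at hcard
  have := Finset.card_pos.2 ⟨H₁, hH₁⟩
  omega

end DihedralGroup

/-- The powerful covering number of `DihedralGroup (2^n)` is `2^(n-1) + 1`: there is a
cover by `2^(n-1) + 1` proper powerful subgroups, and every cover by proper powerful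
subgroups has at least `2^(n-1) + 1` members. -/
theorem dihedral_powerfulCoveringNumber (n : ℕ) (hn : 2 ≤ n) :
    (∃ S : Finset (Subgroup (DihedralGroup (2 ^ n))),
      S.card = 2 ^ (n - 1) + 1 ∧ IsSubgroupCover S ∧ ∀ H ∈ S, IsPowerful 2 H) ∧
    (∀ S : Finset (Subgroup (DihedralGroup (2 ^ n))),
      IsSubgroupCover S → (∀ H ∈ S, IsPowerful 2 H) → 2 ^ (n - 1) + 1 ≤ S.card) := by
  obtain ⟨m, rfl⟩ : ∃ m, n = m + 1 := ⟨n - 1, by omega⟩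
  rw [Nat.add_sub_cancel]
  exact ⟨exists_powerful_cover (by omega), fun S => card_le_of_powerful_cover⟩
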